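/- Let h(z) = 1 + |z|²·u²(|z|²) on ℂ \ {0}, with u(t) = (t−1)/(t·log t). Then the Gaussian curvature κ = −2·h^{-1}·∂∂̄ log h of the conformal metric h|dz|² satisfies κ(z) → −4 as |z| → 0. -/

import Mathlib

open Real MeasureTheory Filter Set

/-- u(t) = (t-1)/(t·log t) with the removable singularity u(1) = 1. -/
noncomputable def u (t : ℝ) : ℝ := if t = 1 then 1 else (t - 1) / (t * Real.log t)

/-- v(t) = ∫₀ᵗ τ·u(τ)² dτ. -/
noncomputable def v (t : ℝ) : ℝ := ∫ τ in Set.Ioo (0:ℝ) t, τ * u τ ^ 2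

/-- The Gaussian curvature κ of the conformal metric (1 + t·u²(t))|dz|², t = |z|²,
expressed as a function of t, with M₁, M₂ as in the paper. -/
noncomputable def curv (t : ℝ) : ℝ :=
  -2 * ((2 * t ^ 3 * u t ^ 3 * deriv (deriv u) t + 2 * t ^ 2 * u t ^ 3 * deriv u t
          - 2 * t ^ 3 * u t ^ 2 * (deriv u t) ^ 2) +
        (u t ^ 2 + 2 * t ^ 2 * (deriv u t) ^ 2 + 2 * t ^ 2 * u t * deriv (deriv u) t
          + 6 * t * u t * deriv u t)) /
    (1 + t * u t ^ 2) ^ 3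

/-! Writing `L = log t`, the functions `u`, `u'`, `u''` are rational in `t` and `L`, and clearing
denominators turns the curvature into `-2 (2 + t P(t, L)) / (t L² + (t - 1)²)³` for a polynomial
`P`. As `t → 0⁺` each `t Lⁿ` tends to `0`, so the numerator tends to `-4` and the denominator
to `1`. -/

open Topology

noncomputable def uDeriv (t : ℝ) : ℝ := (log t - t + 1) / (t ^ 2 * log t ^ 2)

noncomputable def uDeriv2 (t : ℝ) : ℝ :=
  (-2 * log t ^ 2 - 3 * log t + t * log t + 2 * t - 2) / (t ^ 3 * log t ^ 3)

lemma u_eventuallyEq_of_ne_one {t : ℝ} (ht : t ≠ 1) :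
    u =ᶠ[𝓝 t] fun s => (s - 1) / (s * log s) := by
  filter_upwards [isOpen_ne.mem_nhds ht] with s hs
  exact if_neg hs

lemma hasDerivAt_u {t : ℝ} (ht : log t ≠ 0) : HasDerivAt u (uDeriv t) t := by
  obtain ⟨h0, h1, -⟩ := log_ne_zero.mp ht
  have hquot := ((hasDerivAt_id t).sub_const 1).div
    ((hasDerivAt_id t).mul (hasDerivAt_log h0)) (mul_ne_zero h0 ht)
  refine (hquot.congr_of_eventuallyEq (u_eventuallyEq_of_ne_one h1)).congr_deriv ?_
  simp only [uDeriv, Pi.mul_apply, id_eq]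
  field_simp
  ring

lemma hasDerivAt_uDeriv {t : ℝ} (ht : log t ≠ 0) : HasDerivAt uDeriv (uDeriv2 t) t := by
  have h0 : t ≠ 0 := (log_ne_zero.mp ht).1
  have hnum := ((hasDerivAt_log h0).sub (hasDerivAt_id t)).add_const 1
  have hden := (hasDerivAt_pow 2 t).mul ((hasDerivAt_log h0).pow 2)
  refine (hnum.div hden (by simp [h0, ht])).congr_deriv ?_
  simp only [uDeriv2, Pi.mul_apply, Pi.pow_apply, Pi.sub_apply, id_eq]
  field_simp
  ring

lemma deriv_deriv_u {t : ℝ} (ht : log t ≠ 0) : deriv (deriv u) t = uDeriv2 t := by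
  have h0 : t ≠ 0 := (log_ne_zero.mp ht).1
  have hderiv : deriv u =ᶠ[𝓝 t] uDeriv := by
    filter_upwards [(continuousAt_log h0).eventually_ne ht] with s hs
    exact (hasDerivAt_u hs).deriv
  rw [hderiv.deriv_eq]
  exact (hasDerivAt_uDeriv ht).deriv

-- With `L = log t`: `t³ L⁶ (M₁ + M₂) = 2 + t * curvNumPoly t L` and
-- `t L² (1 + t u²) = t L² + (t - 1)²`.
noncomputable def curvNumPoly (t L : ℝ) : ℝ :=
  (1 + t ^ 2) * L ^ 4 + (4 - 4 * t ^ 2) * L ^ 3 + (4 - 8 * t + 4 * t ^ 2) * L ^ 2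
    + (-8 + 12 * t - 8 * t ^ 2 + 2 * t ^ 3)

lemma curv_eq_of_log_ne_zero {t : ℝ} (ht : log t ≠ 0) :
    curv t = -2 * (2 + t * curvNumPoly t (log t)) / (t * log t ^ 2 + (t - 1) ^ 2) ^ 3 := by
  obtain ⟨h0, h1, -⟩ := log_ne_zero.mp ht
  rw [curv, u, if_neg h1, (hasDerivAt_u ht).deriv, deriv_deriv_u ht, uDeriv, uDeriv2,
    curvNumPoly]
  generalize log t = L at *
  have hconf : 1 + t * ((t - 1) / (t * L)) ^ 2 = (t * L ^ 2 + (t - 1) ^ 2) / (t * L ^ 2) := by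
    field_simp
  rw [hconf, div_pow (t * L ^ 2 + (t - 1) ^ 2), div_div_eq_mul_div]
  congr 1
  field_simp
  ring

lemma tendsto_mul_log_pow_nhdsGT_zero (n : ℕ) :
    Tendsto (fun t => t * log t ^ n) (𝓝[>] 0) (𝓝 0) := by
  rcases n.eq_zero_or_pos with rfl | hn
  · simp only [pow_zero, mul_one]
    exact tendsto_nhdsWithin_of_tendsto_nhds tendsto_id
  -- `t logⁿ t = (log t * t ^ (1 / n)) ^ n`
  have h := (tendsto_log_mul_rpow_nhdsGT_zero (r := 1 / n) (by positivity)).pow n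
  rw [zero_pow hn.ne'] at h
  refine h.congr' (eventually_mem_nhdsWithin.mono fun t ht => ?_)
  dsimp only
  rw [mul_pow, ← rpow_natCast (t ^ _), ← rpow_mul (le_of_lt ht),
    one_div_mul_cancel (by positivity), rpow_one, mul_comm]

lemma tendsto_mul_curvNumPoly :
    Tendsto (fun t => t * curvNumPoly t (log t)) (𝓝[>] 0) (𝓝 0) := by
  have term (c : ℝ → ℝ) (hc : Continuous c) (n : ℕ) :
      Tendsto (fun t => c t * (t * log t ^ n)) (𝓝[>] 0) (𝓝 0) := by
    simpa using (hc.tendsto 0).mono_left nhdsWithin_le_nhds |>.mul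
      (tendsto_mul_log_pow_nhdsGT_zero n)
  have h := (((term (fun t => 1 + t ^ 2) (by fun_prop) 4).add
    (term (fun t => 4 - 4 * t ^ 2) (by fun_prop) 3)).add
    (term (fun t => 4 - 8 * t + 4 * t ^ 2) (by fun_prop) 2)).add
    (term (fun t => -8 + 12 * t - 8 * t ^ 2 + 2 * t ^ 3) (by fun_prop) 0)
  simp only [add_zero] at h
  refine h.congr fun t => ?_
  simp only [curvNumPoly]
  ring

theorem curv_tendsto_neg_four :
    Filter.Tendsto curv (nhdsWithin 0 (Set.Ioi 0)) (nhds (-4)) := by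
  have hnum : Tendsto (fun t => -2 * (2 + t * curvNumPoly t (log t))) (𝓝[>] 0) (𝓝 (-4)) := by
    simpa [show (-2 : ℝ) * 2 = -4 by norm_num] using
      (tendsto_mul_curvNumPoly.const_add 2).const_mul (-2)
  have hden : Tendsto (fun t => (t * log t ^ 2 + (t - 1) ^ 2) ^ 3) (𝓝[>] 0) (𝓝 1) := by
    have hsq : Tendsto (fun t : ℝ => (t - 1) ^ 2) (𝓝[>] 0) (𝓝 1) :=
      ((by fun_prop : Continuous fun t : ℝ => (t - 1) ^ 2).tendsto' 0 1 (by norm_num)).mono_left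
        nhdsWithin_le_nhds
    simpa using ((tendsto_mul_log_pow_nhdsGT_zero 2).add hsq).pow 3
  refine (div_one (-4 : ℝ) ▸ hnum.div hden one_ne_zero).congr' ?_
  filter_upwards [Ioo_mem_nhdsGT (zero_lt_one' ℝ)] with t ht
  exact (curv_eq_of_log_ne_zero (log_neg ht.1 ht.2).ne).symm
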